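/- Let integers 1 ≤ k < t−1 with t+1 ≤ n, p ≥ 2, ν ∈ [0,1], and let f_t(x) = (1/(p+ν))·[Σ_{i=1}^{t−1}|x^{(i)}−x^{(i+1)}|^{p+ν} + Σ_{i=t}^{n}|x^{(i)}|^{p+ν}] − x^{(1)}. Then for every x ∈ ℝⁿ with x^{(i)} = 0 for all i > k, one has ‖∇f_t(x)‖ ≥ 1/√(k+1). -/

import Mathlib

/-!
Test the derivative of `f_t` at `x` against `u = (1, …, 1, 0, …, 0)` with `k + 1` ones. Every
difference term `|x_i - x_{i+1}|^{q-2} (x_i - x_{i+1}) (u_i - u_{i+1})` has a vanishing factor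
(`x` is zero beyond coordinate `k`, `u` is constant up to coordinate `k + 1`), and so does every
tail term since `t > k`. Only `-u_1 = -1` survives, so `‖∇f_t(x)‖ ≥ 1 / ‖u‖ = 1 / √(k + 1)`.
-/

/-- The `i`-th coordinate of `x` in 1-based indexing (0 outside the range `1..n`). -/
noncomputable def coord {n : ℕ} (x : EuclideanSpace ℝ (Fin n)) (i : ℕ) : ℝ :=
  if h : 1 ≤ i ∧ i ≤ n then x ⟨i - 1, by omega⟩ else 0

/-- The difficult function `f_t` from the lower-bound construction, with exponent `pν = p + ν`. -/
noncomputable def hardFun (n t : ℕ) (pν : ℝ) (x : EuclideanSpace ℝ (Fin n)) : ℝ :=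
  (1 / pν) * ((∑ i ∈ Finset.Ico 1 t, |coord x i - coord x (i + 1)| ^ pν)
    + ∑ i ∈ Finset.Icc t n, |coord x i| ^ pν) - coord x 1

open Finset

noncomputable def coordCLM (n i : ℕ) : EuclideanSpace ℝ (Fin n) →L[ℝ] ℝ :=
  if h : 1 ≤ i ∧ i ≤ n then EuclideanSpace.proj (⟨i - 1, by omega⟩ : Fin n) else 0

lemma coordCLM_apply {n : ℕ} (i : ℕ) (x : EuclideanSpace ℝ (Fin n)) :
    coordCLM n i x = coord x i := by
  unfold coord coordCLM
  split <;> simp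

lemma hasFDerivAt_abs_rpow_comp {E : Type*} [NormedAddCommGroup E] [NormedSpace ℝ E]
    (ℓ : E →L[ℝ] ℝ) {q : ℝ} (hq : 1 < q) (x : E) :
    HasFDerivAt (fun y => |ℓ y| ^ q) ((q * |ℓ x| ^ (q - 2) * ℓ x) • ℓ) x :=
  (hasDerivAt_abs_rpow (ℓ x) hq).comp_hasFDerivAt x ℓ.hasFDerivAt

lemma fderiv_hardFun_apply {n t : ℕ} {q : ℝ} (hq : 1 < q) (x u : EuclideanSpace ℝ (Fin n)) :
    fderiv ℝ (hardFun n t q) x u =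
      (∑ i ∈ Ico 1 t, |coord x i - coord x (i + 1)| ^ (q - 2) * (coord x i - coord x (i + 1))
          * (coord u i - coord u (i + 1)))
        + (∑ i ∈ Icc t n, |coord x i| ^ (q - 2) * coord x i * coord u i) - coord u 1 := by
  let D i := coordCLM n i - coordCLM n (i + 1)
  have hfun : hardFun n t q = fun y => (1 / q) * ((∑ i ∈ Ico 1 t, |D i y| ^ q)
      + ∑ i ∈ Icc t n, |coordCLM n i y| ^ q) - coordCLM n 1 y := by
    funext y
    simp [hardFun, D, coordCLM_apply]
  have hderiv :=
    (((HasFDerivAt.fun_sum (u := Ico 1 t) fun i _ => hasFDerivAt_abs_rpow_comp (D i) hq x).fun_add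
      (HasFDerivAt.fun_sum (u := Icc t n) fun i _ =>
        hasFDerivAt_abs_rpow_comp (coordCLM n i) hq x)).const_mul (1 / q)).fun_sub
      (coordCLM n 1).hasFDerivAt
  rw [hfun, hderiv.fderiv]
  have hq0 : q ≠ 0 := by linarith
  simp only [one_div, sub_apply, coordCLM_apply, smul_add, add_apply, smul_apply,
    _root_.sum_apply, smul_eq_mul, mul_sum, sub_left_inj, D]
  field_simp

lemma fderiv_hardFun_apply_eq_neg_coord_one {n t k : ℕ} {q : ℝ} (hq : 1 < q) (hkt : k < t)
    {x u : EuclideanSpace ℝ (Fin n)} (hx : ∀ i, k < i → coord x i = 0)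
    (hu : ∀ i, 1 ≤ i → i ≤ k → coord u i = coord u (i + 1)) :
    fderiv ℝ (hardFun n t q) x u = -coord u 1 := by
  have hdiff : ∀ i ∈ Ico 1 t, |coord x i - coord x (i + 1)| ^ (q - 2)
      * (coord x i - coord x (i + 1)) * (coord u i - coord u (i + 1)) = 0 := by
    intro i hi
    rcases le_or_gt i k with hik | hik
    · rw [hu i (mem_Ico.1 hi).1 hik, sub_self, mul_zero]
    · rw [hx i hik, hx (i + 1) (by omega), sub_self, mul_zero, zero_mul]
  have htail : ∀ i ∈ Icc t n, |coord x i| ^ (q - 2) * coord x i * coord u i = 0 := fun i hi => by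
    rw [hx i (by have := (mem_Icc.1 hi).1; omega), mul_zero, zero_mul]
  rw [fderiv_hardFun_apply hq, sum_eq_zero hdiff, sum_eq_zero htail]
  ring

noncomputable def firstOnes (n m : ℕ) : EuclideanSpace ℝ (Fin n) :=
  WithLp.toLp 2 fun j => if (j : ℕ) < m then 1 else 0

lemma coord_firstOnes {n m i : ℕ} (h1 : 1 ≤ i) (him : i ≤ m) (hin : i ≤ n) :
    coord (firstOnes n m) i = 1 := by
  simp only [coord, firstOnes, dif_pos (And.intro h1 hin)]
  exact if_pos (by omega)

lemma norm_firstOnes {n m : ℕ} (hmn : m ≤ n) : ‖firstOnes n m‖ = √m := by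
  rw [EuclideanSpace.norm_eq]
  simp [firstOnes, apply_ite, Fin.card_filter_val_lt, hmn]

theorem hardFun_gradient_lower_bound_general
    (n k t : ℕ) (hkt : k < t - 1) (htn : t + 1 ≤ n)
    (p ν : ℝ) (hp : 2 ≤ p) (hν : ν ∈ Set.Icc (0:ℝ) 1)
    (x : EuclideanSpace ℝ (Fin n)) (hx : ∀ i : ℕ, k < i → coord x i = 0) :
    1 / Real.sqrt ((k : ℝ) + 1) ≤ ‖gradient (hardFun n t (p + ν)) x‖ := by
  have hq : 1 < p + ν := by linarith [hν.1, hp]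
  set u := firstOnes n (k + 1)
  have hu1 : coord u 1 = 1 := coord_firstOnes le_rfl (by omega) (by omega)
  have hu : ∀ i, 1 ≤ i → i ≤ k → coord u i = coord u (i + 1) := fun i h1 hik => by
    rw [coord_firstOnes h1 (by omega) (by omega), coord_firstOnes (by omega) (by omega) (by omega)]
  have hderiv : fderiv ℝ (hardFun n t (p + ν)) x u = -1 := by
    rw [fderiv_hardFun_apply_eq_neg_coord_one hq (by omega) hx hu, hu1]
  have hnorm : ‖u‖ = √((k : ℝ) + 1) := by
    rw [norm_firstOnes (by omega)]; push_cast; rfl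
  have hbound := (fderiv ℝ (hardFun n t (p + ν)) x).le_opNorm u
  rw [hderiv, hnorm, norm_neg, norm_one] at hbound
  rw [gradient, LinearIsometryEquiv.norm_map, div_le_iff₀ (by positivity)]
  exact hbound

theorem hardFun_gradient_lower_bound
    (n k t : ℕ) (hk : 1 ≤ k) (hkt : k < t - 1) (htn : t + 1 ≤ n)
    (p ν : ℝ) (hp : 2 ≤ p) (hν : ν ∈ Set.Icc (0:ℝ) 1)
    (x : EuclideanSpace ℝ (Fin n)) (hx : ∀ i : ℕ, k < i → coord x i = 0) :
    1 / Real.sqrt ((k : ℝ) + 1) ≤ ‖gradient (hardFun n t (p + ν)) x‖ :=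
  hardFun_gradient_lower_bound_general n k t hkt htn p ν hp hν x hx
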